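/- arXiv:1902.00362 — 3 statements merged into one kernel-verified Lean document; each statement's English description precedes it below -/
import Mathlib

section
/- Let n ≥ 4 be even and let P(x) = x^n + a_{n−2}x^{n−2} + … + a_1 x + a_0 be a real polynomial with zero coefficient in degree n−1. Set Q(x) = P'(x)/n (which does not depend on a_0) and R^0(x) = x·Q(x) − (P(x) − a_0), a polynomial with zero constant term. Suppose Q has n−1 distinct real roots α_1 < … < α_{n−1}. If max over even j of R^0(α_j) < a_0 < min over odd j of R^0(α_j), then P has n distinct real roots. -/
open Polynomial Filter Set

/-- Let `n ≥ 4` be even and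
`P = X^n + a_{n−2}X^{n−2} + … + a_1 X + a_0` (zero coefficient in degree `n−1`).
Set `Q = P'/n` and `R⁰ = X·Q − (P − a_0)` (the remainder without its constant term).
If `Q` has `n−1` distinct real roots `α 0 < … < α (n−2)` (0-based) and
`max_{even 1-based j} R⁰(α_j) < a_0 < min_{odd 1-based j} R⁰(α_j)`
(in 0-based indexing: `R⁰(α i) < a 0` for odd `i` and `a 0 < R⁰(α i)` for even `i`),
then `P` has `n` distinct real roots. -/
theorem stmt2 (n : ℕ) (hn : 4 ≤ n) (hneven : Even n)
    (a : ℕ → ℝ)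
    (P Q R0 : Polynomial ℝ)
    (hP : P = X ^ n + ∑ k ∈ Finset.range (n - 1), C (a k) * X ^ k)
    (hQ : Q = C ((n : ℝ)⁻¹) * Polynomial.derivative P)
    (hR0 : R0 = X * Q - (P - C (a 0)))
    (α : ℕ → ℝ)
    (hαmono : ∀ i j, i < j → j < n - 1 → α i < α j)
    (hαroot : ∀ i < n - 1, Q.eval (α i) = 0)
    (hupper : ∀ i < n - 1, Odd i → R0.eval (α i) < a 0)
    (hlower : ∀ i < n - 1, Even i → a 0 < R0.eval (α i)) :
    ∃ r : Fin n → ℝ, StrictMono r ∧ ∀ i, P.eval (r i) = 0 := by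
  have hn0 : (0:ℕ) < n := by omega
  -- degree facts
  have hSdeg : (∑ k ∈ Finset.range (n - 1), C (a k) * X ^ k : ℝ[X]).degree
      < (X ^ n : ℝ[X]).degree := by
    rw [degree_X_pow]
    refine lt_of_le_of_lt (degree_sum_le _ _) ?_
    rw [Finset.sup_lt_iff (by exact_mod_cast WithBot.bot_lt_coe n)]
    intro k hk
    refine lt_of_le_of_lt (degree_C_mul_X_pow_le _ _) ?_
    exact_mod_cast Nat.lt_of_lt_of_le (Finset.mem_range.mp hk) (by omega)
  have hmonic : P.Monic := by
    rw [hP]; exact (monic_X_pow n).add_of_left hSdeg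
  have hPdeg : P.degree = n := by
    rw [hP, degree_add_eq_left_of_degree_lt hSdeg, degree_X_pow]
  have hPnd : P.natDegree = n := natDegree_eq_of_degree_eq_some hPdeg
  -- value of P at the critical points
  have hPα : ∀ i, i < n - 1 → P.eval (α i) = a 0 - R0.eval (α i) := by
    intro i hi
    have h := hαroot i hi
    have h2 : R0.eval (α i) = α i * Q.eval (α i) - (P.eval (α i) - a 0) := by
      rw [hR0]; simp
    rw [h] at h2; linarith
  -- behaviour at infinity
  have htop : Tendsto (fun x => P.eval x) atTop atTop :=
    tendsto_atTop_of_leadingCoeff_nonneg P (by rw [hPdeg]; exact_mod_cast hn0)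
      (by rw [hmonic.leadingCoeff]; norm_num)
  have hbot : Tendsto (fun x => P.eval x) atBot atTop := by
    have hnd1 : ((-X : ℝ[X])).natDegree = 1 := by simp
    have hcd : (P.comp (-X)).natDegree = n := by
      rw [natDegree_comp, hnd1, hPnd, mul_one]
    have hlc : (P.comp (-X)).leadingCoeff = 1 := by
      rw [leadingCoeff_comp (by rw [hnd1]; norm_num), hmonic.leadingCoeff, hPnd]
      simp [hneven.neg_one_pow]
    have h2 : Tendsto (fun x => (P.comp (-X)).eval x) atTop atTop :=
      tendsto_atTop_of_leadingCoeff_nonneg _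
        (natDegree_pos_iff_degree_pos.mp (by omega)) (by rw [hlc]; norm_num)
    have h3 := h2.comp tendsto_neg_atBot_atTop
    simpa [Function.comp_def, eval_comp] using h3
  obtain ⟨b, hbα, hbpos⟩ : ∃ b, α (n - 2) < b ∧ 0 < P.eval b := by
    obtain ⟨b, hb⟩ := ((htop.eventually_gt_atTop 0).and (eventually_gt_atTop (α (n - 2)))).exists
    exact ⟨b, hb.2, hb.1⟩
  obtain ⟨c, hcα, hcpos⟩ : ∃ c, c < α 0 ∧ 0 < P.eval c := by
    obtain ⟨c, hc⟩ := ((hbot.eventually_gt_atTop 0).and (eventually_lt_atBot (α 0))).exists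
    exact ⟨c, hc.2, hc.1⟩
  -- the chain of points
  set β : ℕ → ℝ := fun i => if i = 0 then c else if i ≤ n - 1 then α (i - 1) else b with hβdef
  have hβ0 : β 0 = c := by simp [hβdef]
  have hβmid : ∀ i, 1 ≤ i → i ≤ n - 1 → β i = α (i - 1) := by
    intro i h1 h2; simp only [hβdef]; rw [if_neg (by omega), if_pos h2]
  have hβn : β n = b := by simp only [hβdef]; rw [if_neg (by omega), if_neg (by omega)]
  have hβstep : ∀ i < n, β i < β (i + 1) := by
    intro i hi
    rcases Nat.eq_zero_or_pos i with h0 | h1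
    · subst h0
      rw [hβ0, hβmid 1 le_rfl (by omega)]
      simpa using hcα
    · rcases eq_or_lt_of_le (Nat.succ_le_of_lt hi) with he | hl
      · rw [hβmid i h1 (by omega), show i + 1 = n from he, hβn]
        have : i - 1 = n - 2 := by omega
        rw [this]; exact hbα
      · rw [hβmid i h1 (by omega), hβmid (i + 1) (by omega) (by omega)]
        have : i + 1 - 1 = i := by omega
        rw [this]
        exact hαmono (i - 1) i (by omega) (by omega)
  have hβmono : ∀ j ≤ n, ∀ i < j, β i < β j := by
    intro j hj
    induction j with
    | zero => omega
    | succ k ih =>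
      intro i hik
      rcases eq_or_lt_of_le (Nat.lt_succ_iff.mp hik) with he | hl
      · rw [he]; exact hβstep k (by omega)
      · exact lt_trans (ih (by omega) i hl) (hβstep k (by omega))
  -- signs along the chain
  have hsign : ∀ i ≤ n, (Even i → 0 < P.eval (β i)) ∧ (Odd i → P.eval (β i) < 0) := by
    intro i hi
    rcases Nat.eq_zero_or_pos i with h0 | h1
    · subst h0
      exact ⟨fun _ => by rwa [hβ0], fun h => absurd h (by simp)⟩
    · rcases eq_or_lt_of_le hi with he | hl
      · subst he
        refine ⟨fun _ => by rwa [hβn], fun h => absurd h ?_⟩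
        simpa [Nat.odd_iff, Nat.even_iff] using hneven
      · rw [hβmid i h1 (by omega)]
        have hi1 : i - 1 < n - 1 := by omega
        constructor
        · intro hev
          have hodd : Odd (i - 1) := by
            rw [Nat.even_iff] at hev; rw [Nat.odd_iff]; omega
          have := hupper (i - 1) hi1 hodd
          rw [hPα (i - 1) hi1]; linarith
        · intro hodd
          have hev : Even (i - 1) := by
            rw [Nat.odd_iff] at hodd; rw [Nat.even_iff]; omega
          have := hlower (i - 1) hi1 hev
          rw [hPα (i - 1) hi1]; linarith
  -- roots between consecutive chain points
  have hroot : ∀ i, i < n → ∃ x, β i < x ∧ x < β (i + 1) ∧ P.eval x = 0 := by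
    intro i hi
    have hle : β i ≤ β (i + 1) := (hβstep i hi).le
    have hcont : ContinuousOn (fun x => P.eval x) (Icc (β i) (β (i + 1))) :=
      (Polynomial.continuous P).continuousOn
    rcases Nat.even_or_odd i with hev | hodd
    · have h1 : 0 < P.eval (β i) := (hsign i (by omega)).1 hev
      have h2 : P.eval (β (i + 1)) < 0 := (hsign (i + 1) (by omega)).2 (Even.add_one hev)
      have := intermediate_value_Ioo' hle hcont (show (0:ℝ) ∈ Ioo (P.eval (β (i+1))) (P.eval (β i)) from ⟨h2, h1⟩)
      obtain ⟨x, hx, hx0⟩ := this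
      exact ⟨x, hx.1, hx.2, hx0⟩
    · have h1 : P.eval (β i) < 0 := (hsign i (by omega)).2 hodd
      have h2 : 0 < P.eval (β (i + 1)) := (hsign (i + 1) (by omega)).1 (Odd.add_one hodd)
      have := intermediate_value_Ioo hle hcont (show (0:ℝ) ∈ Ioo (P.eval (β i)) (P.eval (β (i+1))) from ⟨h1, h2⟩)
      obtain ⟨x, hx, hx0⟩ := this
      exact ⟨x, hx.1, hx.2, hx0⟩
  choose x hx1 hx2 hx3 using hroot
  refine ⟨fun i => x i i.isLt, ?_, fun i => hx3 i i.isLt⟩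
  intro i j hij
  have hij' : (i : ℕ) < (j : ℕ) := hij
  have h1 : x i i.isLt < β (i + 1) := hx2 i i.isLt
  have h2 : β j < x j j.isLt := hx1 j j.isLt
  have h3 : β ((i : ℕ) + 1) ≤ β (j : ℕ) := by
    rcases eq_or_lt_of_le (Nat.succ_le_of_lt hij') with he | hl
    · exact (congrArg β he).le
    · exact (hβmono j (le_of_lt j.isLt) _ hl).le
  exact lt_of_lt_of_le h1 (le_trans h3 h2.le)
end

section
/- Let n ≥ 5 be odd and let P(x) = x^n + a_{n−2}x^{n−2} + … + a_1 x + a_0 be a real polynomial with zero coefficient in degree n−1. Set Q(x) = P'(x)/n (which does not depend on a_0) and R^0(x) = x·Q(x) − (P(x) − a_0), a polynomial with zero constant term. Suppose Q has n−1 distinct real roots α_1 < … < α_{n−1}. If max over odd j of R^0(α_j) < a_0 < min over even j of R^0(α_j), then P has n distinct real roots. -/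
open Polynomial Filter

/-- Let `n ≥ 5` be odd and
`P = X^n + a_{n−2}X^{n−2} + … + a_1 X + a_0` (zero coefficient in degree `n−1`).
Set `Q = P'/n` and `R⁰ = X·Q − (P − a_0)` (the remainder without its constant term).
If `Q` has `n−1` distinct real roots `α 0 < … < α (n−2)` (0-based) and
`max_{odd 1-based j} R⁰(α_j) < a_0 < min_{even 1-based j} R⁰(α_j)`
(in 0-based indexing: `R⁰(α i) < a_0` for even `i` and `a_0 < R⁰(α i)` for odd `i`),
then `P` has `n` distinct real roots. -/
theorem stmt3 (n : ℕ) (hn : 5 ≤ n) (hnodd : Odd n)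
    (a : ℕ → ℝ)
    (P Q R0 : Polynomial ℝ)
    (hP : P = X ^ n + ∑ k ∈ Finset.range (n - 1), C (a k) * X ^ k)
    (hQ : Q = C ((n : ℝ)⁻¹) * Polynomial.derivative P)
    (hR0 : R0 = X * Q - (P - C (a 0)))
    (α : ℕ → ℝ)
    (hαmono : ∀ i j, i < j → j < n - 1 → α i < α j)
    (hαroot : ∀ i < n - 1, Q.eval (α i) = 0)
    (hupper : ∀ i < n - 1, Even i → R0.eval (α i) < a 0)
    (hlower : ∀ i < n - 1, Odd i → a 0 < R0.eval (α i)) :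
    ∃ r : Fin n → ℝ, StrictMono r ∧ ∀ i, P.eval (r i) = 0 := by
  classical
  -- degree facts
  have hSdeg : (∑ k ∈ Finset.range (n - 1), C (a k) * X ^ k).degree < ((n : ℕ) : WithBot ℕ) := by
    refine lt_of_le_of_lt (degree_sum_le _ _) ?_
    rw [Finset.sup_lt_iff (by exact_mod_cast WithBot.bot_lt_coe n)]
    intro k hk
    refine lt_of_le_of_lt (degree_C_mul_X_pow_le k (a k)) ?_
    exact_mod_cast (Finset.mem_range.mp hk).trans_le (by omega)
  have hmonic : P.Monic := by
    rw [hP]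
    exact (monic_X_pow n).add_of_left (by rwa [degree_X_pow])
  have hPdeg : P.degree = n := by
    rw [hP, degree_add_eq_left_of_degree_lt (by rwa [degree_X_pow]), degree_X_pow]
  have hPnat : P.natDegree = n := natDegree_eq_of_degree_eq_some hPdeg
  have hPdegpos : 0 < P.degree := by rw [hPdeg]; exact_mod_cast (by omega : 0 < n)
  -- sign of P at the critical points
  have hPα : ∀ i < n - 1, P.eval (α i) = a 0 - R0.eval (α i) := by
    intro i hi
    rw [hR0]
    simp [hαroot i hi]
  have hpos : ∀ i < n - 1, Even i → 0 < P.eval (α i) := by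
    intro i hi he; rw [hPα i hi]; linarith [hupper i hi he]
  have hneg : ∀ i < n - 1, Odd i → P.eval (α i) < 0 := by
    intro i hi ho; rw [hPα i hi]; linarith [hlower i hi ho]
  have hc : Continuous fun x => P.eval x := P.continuous
  -- behavior at -∞ and +∞
  have htop : Tendsto (fun x => P.eval x) atTop atTop :=
    P.tendsto_atTop_of_leadingCoeff_nonneg hPdegpos (by rw [hmonic.leadingCoeff]; norm_num)
  have hbot : Tendsto (fun x => P.eval x) atBot atBot := by
    have hXd : ((-X : ℝ[X])).natDegree = 1 := by simp
    have h1 : (P.comp (-X)).leadingCoeff ≤ 0 := by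
      rw [leadingCoeff_comp (by rw [hXd]; exact one_ne_zero), hmonic.leadingCoeff]
      have hl : (-X : ℝ[X]).leadingCoeff = -1 := by simp
      rw [hl, hPnat, hnodd.neg_one_pow]
      norm_num
    have h2 : 0 < (P.comp (-X)).degree := by
      rw [← natDegree_pos_iff_degree_pos, natDegree_comp, hXd, hPnat]
      omega
    have h3 := (P.comp (-X)).tendsto_atBot_of_leadingCoeff_nonpos h2 h1
    have h4 : Tendsto (fun x : ℝ => -x) atBot atTop := tendsto_neg_atBot_atTop
    have h5 := h3.comp h4
    refine h5.congr fun x => ?_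
    simp [eval_comp]
  -- a point to the left of α 0 where P is negative
  obtain ⟨M0, hM0⟩ := eventually_atBot.mp (hbot.eventually (eventually_lt_atBot 0))
  set M : ℝ := min M0 (α 0 - 1) with hMdef
  have hMlt : M < α 0 := lt_of_le_of_lt (min_le_right _ _) (by linarith)
  have hMneg : P.eval M < 0 := hM0 M (min_le_left _ _)
  -- a point to the right of α (n-2) where P is positive
  obtain ⟨N0, hN0⟩ := eventually_atTop.mp (htop.eventually (eventually_gt_atTop 0))
  set N : ℝ := max N0 (α (n - 2) + 1) with hNdef
  have hNgt : α (n - 2) < N := lt_of_lt_of_le (by linarith) (le_max_right _ _)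
  have hNpos : 0 < P.eval N := hN0 N (le_max_left _ _)
  have h0pos : 0 < P.eval (α 0) := hpos 0 (by omega) Even.zero
  have hlast : P.eval (α (n - 2)) < 0 := by
    refine hneg (n - 2) (by omega) ?_
    obtain ⟨k, hk⟩ := hnodd
    exact ⟨k - 1, by omega⟩
  -- leftmost root
  obtain ⟨cl, hcl, hcl0⟩ : ∃ y ∈ Set.Ioo M (α 0), P.eval y = 0 :=
    intermediate_value_Ioo hMlt.le hc.continuousOn (Set.mem_Ioo.mpr ⟨hMneg, h0pos⟩)
  -- rightmost root
  obtain ⟨dr, hdr, hdr0⟩ : ∃ y ∈ Set.Ioo (α (n - 2)) N, P.eval y = 0 :=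
    intermediate_value_Ioo hNgt.le hc.continuousOn (Set.mem_Ioo.mpr ⟨hlast, hNpos⟩)
  -- middle roots
  have hmid : ∀ i, i + 1 < n - 1 → ∃ y, α i < y ∧ y < α (i + 1) ∧ P.eval y = 0 := by
    intro i hi
    have hlt : α i < α (i + 1) := hαmono i (i + 1) (lt_add_one i) hi
    rcases Nat.even_or_odd i with he | ho
    · have h1 : 0 < P.eval (α i) := hpos i (by omega) he
      have h2 : P.eval (α (i + 1)) < 0 := hneg (i + 1) hi (Even.add_one he)
      obtain ⟨y, hy, hy0⟩ := intermediate_value_Ioo' hlt.le hc.continuousOn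
        (Set.mem_Ioo.mpr ⟨h2, h1⟩)
      exact ⟨y, hy.1, hy.2, hy0⟩
    · have h1 : P.eval (α i) < 0 := hneg i (by omega) ho
      have h2 : 0 < P.eval (α (i + 1)) := hpos (i + 1) hi (Odd.add_one ho)
      obtain ⟨y, hy, hy0⟩ := intermediate_value_Ioo hlt.le hc.continuousOn
        (Set.mem_Ioo.mpr ⟨h1, h2⟩)
      exact ⟨y, hy.1, hy.2, hy0⟩
  set x : ℕ → ℝ := fun i => if h : i + 1 < n - 1 then (hmid i h).choose else 0 with hxdef
  have hx1 : ∀ i (h : i + 1 < n - 1), α i < x i := by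
    intro i h; rw [hxdef]; simp only [dif_pos h]; exact (hmid i h).choose_spec.1
  have hx2 : ∀ i (h : i + 1 < n - 1), x i < α (i + 1) := by
    intro i h; rw [hxdef]; simp only [dif_pos h]; exact (hmid i h).choose_spec.2.1
  have hx3 : ∀ i (h : i + 1 < n - 1), P.eval (x i) = 0 := by
    intro i h; rw [hxdef]; simp only [dif_pos h]; exact (hmid i h).choose_spec.2.2
  -- assemble
  set r : ℕ → ℝ := fun i =>
    if i = 0 then cl else if i ≤ n - 2 then x (i - 1) else dr + ((i - (n - 1) : ℕ) : ℝ)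
    with hrdef
  have hr0 : r 0 = cl := by simp [hrdef]
  have hrmid : ∀ i, 1 ≤ i → i ≤ n - 2 → r i = x (i - 1) := by
    intro i h1 h2
    have h0 : i ≠ 0 := by omega
    simp [hrdef, h0, h2]
  have hrlast : r (n - 1) = dr := by
    have h1 : n - 1 ≠ 0 := by omega
    have h2 : ¬ (n - 1 ≤ n - 2) := by omega
    have h3 : n - 1 - (n - 1) = 0 := by omega
    simp [hrdef, h1, h2, h3]
  have hrtail : ∀ i, n - 1 ≤ i → r i = dr + ((i - (n - 1) : ℕ) : ℝ) := by
    intro i h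
    have h0 : i ≠ 0 := by omega
    have h2 : ¬ (i ≤ n - 2) := by omega
    simp [hrdef, h0, h2]
  have hadj : ∀ i, r i < r (i + 1) := by
    intro i
    rcases eq_or_ne i 0 with rfl | hi0
    · rw [hr0, hrmid 1 le_rfl (by omega)]
      have h01 : 0 + 1 < n - 1 := by omega
      exact hcl.2.trans (hx1 0 h01)
    · rcases lt_or_ge (i + 1) (n - 1) with hlt | hge
      · rw [hrmid i (by omega) (by omega), hrmid (i + 1) (by omega) (by omega)]
        have e1 : i - 1 + 1 = i := by omega
        have h1 : (i - 1) + 1 < n - 1 := by omega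
        have h2 : i + 1 - 1 = i := by omega
        calc x (i - 1) < α (i - 1 + 1) := hx2 (i - 1) h1
          _ = α i := by rw [e1]
          _ < x i := hx1 i hlt
          _ = x (i + 1 - 1) := by rw [h2]
      · rcases eq_or_lt_of_le hge with heq | hgt
        · have hi : i = n - 2 := by omega
          rw [hrmid i (by omega) (by omega), ← heq, hrlast]
          have e1 : i - 1 + 1 = i := by omega
          have h1 : (i - 1) + 1 < n - 1 := by omega
          calc x (i - 1) < α (i - 1 + 1) := hx2 (i - 1) h1
            _ = α (n - 2) := by rw [e1, hi]
            _ < dr := hdr.1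
        · rw [hrtail i (by omega), hrtail (i + 1) (by omega)]
          have hnn : (i - (n - 1) : ℕ) < (i + 1 - (n - 1) : ℕ) := by omega
          have hcast := (Nat.cast_lt (α := ℝ)).mpr hnn
          linarith
  have hmono : StrictMono r := strictMono_nat_of_lt_succ hadj
  refine ⟨fun i => r i, fun i j hij => hmono hij, ?_⟩
  intro i
  show P.eval (r (i : ℕ)) = 0
  rcases eq_or_ne (i : ℕ) 0 with h0 | h0
  · rw [h0, hr0]; exact hcl0
  · rcases lt_or_ge (i : ℕ) (n - 1) with hlt | hge
    · rw [hrmid i (by omega) (by omega)]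
      exact hx3 ((i : ℕ) - 1) (by omega)
    · have hi : (i : ℕ) = n - 1 := by omega
      rw [hi, hrlast]; exact hdr0
end

section
/- Let p, q, r, s be real numbers and a a real number. Then a is a root of multiplicity at least three of P_5(x) = x^5 + (10p/3)x^3 + 10qx^2 + 20rx + 20s if and only if a^3 + ap + q = 0, 4r = 3a^4 + 2a^2 p, and 20s = −6a^5 − (10/3)a^3 p. In that case P_5(x) = (x − a)^3 · (x^2 + 3ax + 6a^2 + 10p/3), and the quadratic quotient x^2 + 3ax + 6a^2 + 10p/3 has two distinct real roots if and only if 9a^2 < −8p (equivalently, −2√(−2p)/3 < a < 2√(−2p)/3 with p < 0). -/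
open Polynomial

/-- A real `a` is a root of multiplicity at least three of
`P₅ = x⁵ + (10p/3)x³ + 10qx² + 20rx + 20s` iff `a³ + ap + q = 0`,
`4r = 3a⁴ + 2a²p` and `20s = −6a⁵ − (10/3)a³p`.  In that case
`P₅ = (x − a)³(x² + 3ax + 6a² + 10p/3)`, and the quadratic quotient has two
distinct real roots iff `9a² < −8p` (equivalently, `p < 0` and
`−2√(−2p)/3 < a < 2√(−2p)/3`). -/
theorem stmt15 (p q r s a : ℝ) (P : Polynomial ℝ)
    (hP : P = X ^ 5 + C (10 * p / 3) * X ^ 3 + C (10 * q) * X ^ 2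
        + C (20 * r) * X + C (20 * s)) :
    ((X - C a) ^ 3 ∣ P ↔
      (a ^ 3 + a * p + q = 0 ∧
       4 * r = 3 * a ^ 4 + 2 * a ^ 2 * p ∧
       20 * s = -6 * a ^ 5 - (10 / 3) * a ^ 3 * p)) ∧
    ((X - C a) ^ 3 ∣ P →
      P = (X - C a) ^ 3 * (X ^ 2 + C (3 * a) * X + C (6 * a ^ 2 + 10 * p / 3))) ∧
    ((∃ x y : ℝ, x < y ∧ x ^ 2 + 3 * a * x + 6 * a ^ 2 + 10 * p / 3 = 0 ∧
        y ^ 2 + 3 * a * y + 6 * a ^ 2 + 10 * p / 3 = 0) ↔ 9 * a ^ 2 < -8 * p) ∧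
    (9 * a ^ 2 < -8 * p ↔
      (p < 0 ∧ -(2 * Real.sqrt (-2 * p)) / 3 < a ∧ a < 2 * Real.sqrt (-2 * p) / 3)) := by
  set Q : Polynomial ℝ := X ^ 2 + C (3 * a) * X + C (6 * a ^ 2 + 10 * p / 3) with hQ
  have key : P = (X - C a) ^ 3 * Q
      + (C (10 * (q + a ^ 3 + a * p)) * X ^ 2
        + C (20 * r - 15 * a ^ 4 - 10 * a ^ 2 * p) * X
        + C (20 * s + 6 * a ^ 5 + 10 / 3 * a ^ 3 * p)) := by
    apply Polynomial.funext
    intro x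
    simp [hP, hQ]
    ring
  -- conditions → equality
  have heq : (a ^ 3 + a * p + q = 0 ∧ 4 * r = 3 * a ^ 4 + 2 * a ^ 2 * p ∧
       20 * s = -6 * a ^ 5 - (10 / 3) * a ^ 3 * p) → P = (X - C a) ^ 3 * Q := by
    rintro ⟨h1, h2, h3⟩
    rw [key, show 10 * (q + a ^ 3 + a * p) = 0 by linarith,
      show 20 * r - 15 * a ^ 4 - 10 * a ^ 2 * p = 0 by linarith,
      show 20 * s + 6 * a ^ 5 + 10 / 3 * a ^ 3 * p = 0 by linarith]
    simp
  have hfwd : (X - C a) ^ 3 ∣ P → (a ^ 3 + a * p + q = 0 ∧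
       4 * r = 3 * a ^ 4 + 2 * a ^ 2 * p ∧
       20 * s = -6 * a ^ 5 - (10 / 3) * a ^ 3 * p) := by
    intro h
    have hdvd : (X - C a) ^ 3 ∣ (C (10 * (q + a ^ 3 + a * p)) * X ^ 2
        + C (20 * r - 15 * a ^ 4 - 10 * a ^ 2 * p) * X
        + C (20 * s + 6 * a ^ 5 + 10 / 3 * a ^ 3 * p)) := by
      have h2 : (X - C a) ^ 3 ∣ (X - C a) ^ 3 * Q := dvd_mul_right _ _
      have := dvd_sub h h2
      rwa [key, add_sub_cancel_left] at this
    have hdeg : ((X - C a) ^ 3 : ℝ[X]).degree = 3 := by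
      simp [degree_pow, degree_X_sub_C]
    have hz := eq_zero_of_dvd_of_degree_lt hdvd
      (lt_of_le_of_lt degree_quadratic_le (by rw [hdeg]; norm_num))
    have e0 := congrArg (Polynomial.eval 0) hz
    have e1 := congrArg (Polynomial.eval 1) hz
    have e2 := congrArg (Polynomial.eval (-1)) hz
    simp only [eval_add, eval_mul, eval_pow, eval_C, eval_X, eval_zero] at e0 e1 e2
    norm_num at e0 e1 e2
    refine ⟨by linarith, by linarith, by linarith⟩
  refine ⟨⟨hfwd, fun h => (heq h).symm ▸ dvd_mul_right _ _⟩,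
    fun h => heq (hfwd h), ?_, ?_⟩
  · constructor
    · rintro ⟨x, y, hxy, hx, hy⟩
      have hs : (y - x) * (x + y + 3 * a) = 0 := by linear_combination hy - hx
      have hsum : x + y + 3 * a = 0 := by
        rcases mul_eq_zero.mp hs with h | h
        · linarith
        · exact h
      have h2x : 2 * x + 3 * a < 0 := by linarith
      nlinarith [mul_pos (neg_pos.mpr h2x) (neg_pos.mpr h2x), hx]
    · intro h
      have hD : (0:ℝ) < -15 * a ^ 2 - 40 * p / 3 := by linarith
      set t := Real.sqrt (-15 * a ^ 2 - 40 * p / 3) with ht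
      have htpos : 0 < t := Real.sqrt_pos.mpr hD
      have ht2 : t ^ 2 = -15 * a ^ 2 - 40 * p / 3 := Real.sq_sqrt hD.le
      refine ⟨(-3 * a - t) / 2, (-3 * a + t) / 2, by linarith, ?_, ?_⟩
      · linear_combination ht2 / 4
      · linear_combination ht2 / 4
  · constructor
    · intro h
      have hp : p < 0 := by nlinarith [sq_nonneg a]
      have ht2 : Real.sqrt (-2 * p) ^ 2 = -2 * p := Real.sq_sqrt (by linarith)
      have htn : 0 ≤ Real.sqrt (-2 * p) := Real.sqrt_nonneg _
      refine ⟨hp, ?_, ?_⟩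
      · by_contra hc
        push_neg at hc
        nlinarith
      · by_contra hc
        push_neg at hc
        nlinarith
    · rintro ⟨hp, h1, h2⟩
      have ht2 : Real.sqrt (-2 * p) ^ 2 = -2 * p := Real.sq_sqrt (by linarith)
      nlinarith
end
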